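/- arXiv:math/0209139 — 3 statements merged into one kernel-verified Lean document; each statement's English description precedes it below -/
import Mathlib

section
/- The bracket defined on E_∞ = A × M × M × E is K-bilinear, alternating, and satisfies the Jacobi identity, so E_∞ is a Lie algebra over K; moreover it is 3-graded: E_∞ = L_0 ⊕ L_+ ⊕ L_-, with [L_0, L_0] ⊆ L_0, [L_0, L_±] ⊆ L_±, [L_+, L_-] ⊆ L_0, and [L_+, L_+] = [L_-, L_-] = 0. -/
set_option linter.unusedSectionVars false


/- Purely even case of the paper's super setting: K a commutative unital ring
containing 1/2, A a commutative unital associative K-algebra, M an A-module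
(hence also a K-module), q : M × M → A a symmetric A-bilinear form. -/

variable {K A M : Type*} [CommRing K] [Invertible (2 : K)] [CommRing A] [Algebra K A]
  [AddCommGroup M] [Module A M] [Module K M] [IsScalarTower K A M]
  [SMulCommClass A K M] [SMulCommClass K A M]

variable (K) in
/-- `a·id_M`, viewed as a `K`-linear endomorphism of `M`. -/
def aId (a : A) : Module.End K M := a • (1 : Module.End K M)

variable (K) in
/-- `E_{m,n}(p) = q(n,p)·m − q(m,p)·n`, viewed as a `K`-linear endomorphism of `M`. -/
noncomputable def EmapK (q : M →ₗ[A] M →ₗ[A] A) (m n : M) : Module.End K M :=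
  ((q n).restrictScalars K).smulRight m - ((q m).restrictScalars K).smulRight n

variable (K) in
/-- `osp(q)`, realized inside `End_K(M)`: the set of `A`-linear endomorphisms `x`
of `M` with `q(x(m),n) + q(x(n),m) = 0` for all `m, n`. -/
def ospK (q : M →ₗ[A] M →ₗ[A] A) : Set (Module.End K M) :=
  {x | (∀ (a : A) (p : M), x (a • p) = a • x p) ∧
       ∀ m n : M, q (x m) n + q (x n) m = 0}

variable (K) in
/-- `eosp(q)`: the additive subgroup generated by the `E_{m,n}`. -/
noncomputable def eospK (q : M →ₗ[A] M →ₗ[A] A) : AddSubgroup (Module.End K M) :=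
  AddSubgroup.closure {f | ∃ m n : M, f = EmapK K q m n}

variable (K) in
/-- The bracket on `E_∞ = A × M × M × E`, where `E` is a Lie subalgebra of
`osp(q)` containing `eosp(q)` (given as a `K`-submodule of `End_K(M)` closed
under commutators and containing all `E_{m,n}`):
`[(a,m,n,x),(a',m',n',x')] = (q(m,n') − q(n,m'),
  a·m' + x(m') − a'·m − x'(m), −a·n' + x(n') + a'·n − x'(n),
  E_{m,n'} + E_{n,m'} + [x,x'])`. -/
noncomputable def brEinf (q : M →ₗ[A] M →ₗ[A] A) (E : Submodule K (Module.End K M))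
    (hEe : ∀ m n : M, EmapK K q m n ∈ E)
    (hbr : ∀ x ∈ E, ∀ y ∈ E, x * y - y * x ∈ E)
    (u v : A × M × M × E) : A × M × M × E :=
  (q u.2.1 v.2.2.1 - q u.2.2.1 v.2.1,
   u.1 • v.2.1 + (u.2.2.2 : Module.End K M) v.2.1 - v.1 • u.2.1
     - (v.2.2.2 : Module.End K M) u.2.1,
   -(u.1 • v.2.2.1) + (u.2.2.2 : Module.End K M) v.2.2.1 + v.1 • u.2.2.1
     - (v.2.2.2 : Module.End K M) u.2.2.1,
   ⟨EmapK K q u.2.1 v.2.2.1 + EmapK K q u.2.2.1 v.2.1 +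
      ((u.2.2.2 : Module.End K M) * (v.2.2.2 : Module.End K M)
        - (v.2.2.2 : Module.End K M) * (u.2.2.2 : Module.End K M)),
    add_mem (add_mem (hEe _ _) (hEe _ _)) (hbr _ u.2.2.2.2 _ v.2.2.2.2)⟩)

variable (K) in
/-- `L_0 = {(a,0,0,x)}`. -/
def L0 (E : Submodule K (Module.End K M)) : Set (A × M × M × E) :=
  {u | u.2.1 = 0 ∧ u.2.2.1 = 0}

variable (K) in
/-- `L_+ = {(0,m,0,0)}`. -/
def Lplus (E : Submodule K (Module.End K M)) : Set (A × M × M × E) :=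
  {u | u.1 = 0 ∧ u.2.2.1 = 0 ∧ u.2.2.2 = 0}

variable (K) in
/-- `L_- = {(0,0,n,0)}`. -/
def Lminus (E : Submodule K (Module.End K M)) : Set (A × M × M × E) :=
  {u | u.1 = 0 ∧ u.2.1 = 0 ∧ u.2.2.2 = 0}

set_option linter.unusedSectionVars false

section Helpers

lemma EmapK_apply (q : M →ₗ[A] M →ₗ[A] A) (m n p : M) :
    EmapK K q m n p = q n p • m - q m p • n := rfl

lemma EmapK_comm (q : M →ₗ[A] M →ₗ[A] A) (hq : ∀ m n : M, q m n = q n m)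
    (x : Module.End K M) (hx1 : ∀ (a : A) (p : M), x (a • p) = a • x p)
    (hx2 : ∀ m n : M, q (x m) n + q (x n) m = 0) (m n : M) :
    x * EmapK K q m n - EmapK K q m n * x
      = EmapK K q (x m) n + EmapK K q m (x n) := by
  have hs : ∀ m n : M, q (x m) n = - q m (x n) := by
    intro m n
    have h1 := hx2 m n
    have h2 := hq (x n) m
    linear_combination h1 - h2
  ext p
  simp only [LinearMap.sub_apply, LinearMap.add_apply, Module.End.mul_apply,
    EmapK_apply, map_sub, hx1, hs]
  module

end Helpers
set_option maxHeartbeats 2000000 in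
/-- the bracket on `E_∞ = A × M × M × E` is `K`-bilinear,
alternating and satisfies the Jacobi identity, so `E_∞` is a Lie algebra over
`K`; moreover `E_∞ = L_0 ⊕ L_+ ⊕ L_-` is 3-graded: `[L_0,L_0] ⊆ L_0`,
`[L_0,L_±] ⊆ L_±`, `[L_+,L_-] ⊆ L_0` and `[L_+,L_+] = [L_-,L_-] = 0`. -/
theorem stmt5 (q : M →ₗ[A] M →ₗ[A] A) (hq : ∀ m n : M, q m n = q n m)
    (E : Submodule K (Module.End K M))
    (hEe : ∀ m n : M, EmapK K q m n ∈ E)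
    (hEo : (E : Set (Module.End K M)) ⊆ ospK K q)
    (hbr : ∀ x ∈ E, ∀ y ∈ E, x * y - y * x ∈ E) :
    (∀ (c : K) (u u' v : A × M × M × E),
        brEinf K q E hEe hbr (c • u + u') v
          = c • brEinf K q E hEe hbr u v + brEinf K q E hEe hbr u' v) ∧
    (∀ (c : K) (u v v' : A × M × M × E),
        brEinf K q E hEe hbr u (c • v + v')
          = c • brEinf K q E hEe hbr u v + brEinf K q E hEe hbr u v') ∧
    (∀ u : A × M × M × E, brEinf K q E hEe hbr u u = 0) ∧
    (∀ u v w : A × M × M × E,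
        brEinf K q E hEe hbr (brEinf K q E hEe hbr u v) w
          + brEinf K q E hEe hbr (brEinf K q E hEe hbr v w) u
          + brEinf K q E hEe hbr (brEinf K q E hEe hbr w u) v = 0) ∧
    (∀ u : A × M × M × E,
        ∃! t : (A × M × M × E) × (A × M × M × E) × (A × M × M × E),
          t.1 ∈ L0 K E ∧ t.2.1 ∈ Lplus K E ∧ t.2.2 ∈ Lminus K E ∧
            u = t.1 + t.2.1 + t.2.2) ∧
    (∀ u ∈ L0 K E, ∀ v ∈ L0 K E, brEinf K q E hEe hbr u v ∈ L0 K E) ∧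
    (∀ u ∈ L0 K E, ∀ v ∈ Lplus K E, brEinf K q E hEe hbr u v ∈ Lplus K E) ∧
    (∀ u ∈ L0 K E, ∀ v ∈ Lminus K E, brEinf K q E hEe hbr u v ∈ Lminus K E) ∧
    (∀ u ∈ Lplus K E, ∀ v ∈ Lminus K E, brEinf K q E hEe hbr u v ∈ L0 K E) ∧
    (∀ u ∈ Lplus K E, ∀ v ∈ Lplus K E, brEinf K q E hEe hbr u v = 0) ∧
    (∀ u ∈ Lminus K E, ∀ v ∈ Lminus K E, brEinf K q E hEe hbr u v = 0) := by
  refine ⟨?_, ?_, ?_, ?_, ?_, ?_, ?_, ?_, ?_, ?_, ?_⟩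
  · -- left linearity
    rintro c ⟨a, m, n, x, hx⟩ ⟨a', m', n', x', hx'⟩ ⟨b, p, r, y, hy⟩
    refine Prod.ext ?_ (Prod.ext ?_ (Prod.ext ?_ (Subtype.ext ?_)))
    · simp only [brEinf, Prod.smul_mk, Prod.mk_add_mk, Prod.fst_add, Prod.smul_fst,
        map_add, LinearMap.add_apply, LinearMap.map_smul_of_tower, LinearMap.smul_apply]
      module
    · simp only [brEinf, Prod.smul_mk, Prod.mk_add_mk, Prod.fst_add, Prod.snd_add,
        Prod.smul_fst, Prod.smul_snd, Submodule.coe_add, Submodule.coe_smul,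
        LinearMap.add_apply, LinearMap.smul_apply, map_add, map_smul, add_smul, smul_assoc]
      module
    · simp only [brEinf, Prod.smul_mk, Prod.mk_add_mk, Prod.fst_add, Prod.snd_add,
        Prod.smul_fst, Prod.smul_snd, Submodule.coe_add, Submodule.coe_smul,
        LinearMap.add_apply, LinearMap.smul_apply, map_add, map_smul, add_smul, smul_assoc]
      module
    · ext pt
      simp only [brEinf, Prod.smul_mk, Prod.mk_add_mk, Prod.fst_add, Prod.snd_add,
        Prod.smul_fst, Prod.smul_snd, Submodule.coe_add, Submodule.coe_smul,
        EmapK_apply, LinearMap.add_apply, LinearMap.smul_apply, LinearMap.sub_apply,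
        Module.End.mul_apply, map_add, map_smul, add_smul, smul_assoc,
        LinearMap.map_smul_of_tower]
      module
  · -- right linearity
    rintro c ⟨a, m, n, x, hx⟩ ⟨a', m', n', x', hx'⟩ ⟨b, p, r, y, hy⟩
    refine Prod.ext ?_ (Prod.ext ?_ (Prod.ext ?_ (Subtype.ext ?_)))
    · simp only [brEinf, Prod.smul_mk, Prod.mk_add_mk, Prod.fst_add, Prod.smul_fst,
        map_add, LinearMap.add_apply, LinearMap.map_smul_of_tower, LinearMap.smul_apply]
      module
    · simp only [brEinf, Prod.smul_mk, Prod.mk_add_mk, Prod.fst_add, Prod.snd_add,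
        Prod.smul_fst, Prod.smul_snd, Submodule.coe_add, Submodule.coe_smul,
        LinearMap.add_apply, LinearMap.smul_apply, map_add, map_smul, add_smul, smul_assoc]
      module
    · simp only [brEinf, Prod.smul_mk, Prod.mk_add_mk, Prod.fst_add, Prod.snd_add,
        Prod.smul_fst, Prod.smul_snd, Submodule.coe_add, Submodule.coe_smul,
        LinearMap.add_apply, LinearMap.smul_apply, map_add, map_smul, add_smul, smul_assoc]
      module
    · ext pt
      simp only [brEinf, Prod.smul_mk, Prod.mk_add_mk, Prod.fst_add, Prod.snd_add,
        Prod.smul_fst, Prod.smul_snd, Submodule.coe_add, Submodule.coe_smul,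
        EmapK_apply, LinearMap.add_apply, LinearMap.smul_apply, LinearMap.sub_apply,
        Module.End.mul_apply, map_add, map_smul, add_smul, smul_assoc,
        LinearMap.map_smul_of_tower]
      module
  · -- alternating
    rintro ⟨a, m, n, x, hx⟩
    refine Prod.ext ?_ (Prod.ext ?_ (Prod.ext ?_ (Subtype.ext ?_)))
    · simp only [brEinf, Prod.fst_zero]
      linear_combination hq m n
    · simp only [brEinf, Prod.fst_zero, Prod.snd_zero]
      abel
    · simp only [brEinf, Prod.fst_zero, Prod.snd_zero]
      abel
    · ext pt
      simp only [brEinf, Prod.snd_zero, ZeroMemClass.coe_zero, EmapK_apply,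
        LinearMap.add_apply, LinearMap.sub_apply, Module.End.mul_apply,
        LinearMap.zero_apply]
      module
  · -- Jacobi
    rintro ⟨a, m, n, x, hx⟩ ⟨a', m', n', x', hx'⟩ ⟨b, p, r, y, hy⟩
    obtain ⟨hx1, hx2⟩ := hEo hx
    obtain ⟨hx1', hx2'⟩ := hEo hx'
    obtain ⟨hy1, hy2⟩ := hEo hy
    have hsx : ∀ m n : M, q (x m) n = - q m (x n) := fun m n => by
      linear_combination hx2 m n - hq (x n) m
    have hsx' : ∀ m n : M, q (x' m) n = - q m (x' n) := fun m n => by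
      linear_combination hx2' m n - hq (x' n) m
    have hsy : ∀ m n : M, q (y m) n = - q m (y n) := fun m n => by
      linear_combination hy2 m n - hq (y n) m
    have hmx : ∀ a b : M, q a (x b) + q b (x a) = 0 := fun a b => by
      linear_combination hx2 b a + hq a (x b) + hq b (x a)
    have hmx' : ∀ a b : M, q a (x' b) + q b (x' a) = 0 := fun a b => by
      linear_combination hx2' b a + hq a (x' b) + hq b (x' a)
    have hmy : ∀ a b : M, q a (y b) + q b (y a) = 0 := fun a b => by
      linear_combination hy2 b a + hq a (y b) + hq b (y a)
    refine Prod.ext ?_ (Prod.ext ?_ (Prod.ext ?_ (Subtype.ext ?_)))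
    · simp only [brEinf, Prod.fst_add, Prod.snd_add, Prod.fst_zero, Prod.snd_zero,
        map_add, map_sub, map_neg, map_smul, LinearMap.add_apply, LinearMap.sub_apply,
        LinearMap.neg_apply, LinearMap.smul_apply, EmapK_apply, Module.End.mul_apply,
        hx1, hx1', hy1, hsx, hsx', hsy, smul_eq_mul]
      linear_combination a * hq m' r + a * hq n' p - a' * hq m r - a' * hq n p
        - b * hq m' n - b * hq n' m - hmx m' r + hmx' m r + hmx n' p - hmx' n p
        + hmy m' n - hmy n' m
    · simp only [brEinf, Prod.fst_add, Prod.snd_add, Prod.fst_zero, Prod.snd_zero,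
        map_add, map_sub, map_neg, map_smul, LinearMap.add_apply, LinearMap.sub_apply,
        LinearMap.neg_apply, LinearMap.smul_apply, EmapK_apply, Module.End.mul_apply,
        hx1, hx1', hy1, hsx, hsx', hsy, smul_eq_mul, sub_smul, add_smul, neg_smul,
        smul_sub, smul_add, smul_neg, mul_smul]
      simp only [hq]
      match_scalars <;> ring1
    · simp only [brEinf, Prod.fst_add, Prod.snd_add, Prod.fst_zero, Prod.snd_zero,
        map_add, map_sub, map_neg, map_smul, LinearMap.add_apply, LinearMap.sub_apply,
        LinearMap.neg_apply, LinearMap.smul_apply, EmapK_apply, Module.End.mul_apply,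
        hx1, hx1', hy1, hsx, hsx', hsy, smul_eq_mul, sub_smul, add_smul, neg_smul,
        smul_sub, smul_add, smul_neg, mul_smul]
      simp only [hq]
      match_scalars <;> ring1
    · simp only [brEinf, Prod.fst_add, Prod.snd_add, Prod.fst_zero, Prod.snd_zero,
        ZeroMemClass.coe_zero, Submodule.coe_add]
      ext pt
      simp only [map_add, map_sub, map_neg, map_smul, LinearMap.add_apply, LinearMap.sub_apply,
        LinearMap.neg_apply, LinearMap.smul_apply, EmapK_apply, Module.End.mul_apply,
        LinearMap.zero_apply, hx1, hx1', hy1, hsx, hsx', hsy, smul_eq_mul, sub_smul, add_smul,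
        neg_smul, smul_sub, smul_add, smul_neg, mul_smul]
      try simp only [hq]
      match_scalars <;> ring1
  · -- decomposition
    rintro ⟨a, m, n, x⟩
    refine ⟨⟨(a, 0, 0, x), (0, m, 0, 0), (0, 0, n, 0)⟩,
      ⟨⟨rfl, rfl⟩, ⟨rfl, rfl, rfl⟩, ⟨rfl, rfl, rfl⟩, by
        simp [Prod.ext_iff]⟩, ?_⟩
    rintro ⟨⟨b1, p1, r1, y1⟩, ⟨b2, p2, r2, y2⟩, ⟨b3, p3, r3, y3⟩⟩
      ⟨⟨e1, e2⟩, ⟨f1, f2, f3⟩, ⟨g1, g2, g3⟩, hsum⟩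
    simp only [L0, Lplus, Lminus, Set.mem_setOf_eq] at e1 e2 f1 f2 f3 g1 g2 g3
    simp only [Prod.mk_add_mk, Prod.mk.injEq] at hsum ⊢
    obtain ⟨h1, h2, h3, h4⟩ := hsum
    subst e1 e2 f1 f2 f3 g1 g2 g3
    simp only [add_zero, zero_add] at h1 h2 h3 h4
    exact ⟨⟨h1.symm, rfl, rfl, h4.symm⟩, ⟨rfl, h2.symm, rfl, rfl⟩, rfl, rfl, h3.symm, rfl⟩
  · -- [L0,L0] ⊆ L0
    rintro ⟨a, m, n, x⟩ ⟨hm, hn⟩ ⟨a', m', n', x'⟩ ⟨hm', hn'⟩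
    simp only [L0, Set.mem_setOf_eq] at *
    subst hm hn hm' hn'
    constructor <;> simp [brEinf]
  · -- [L0,L+] ⊆ L+
    rintro ⟨a, m, n, x⟩ ⟨hm, hn⟩ ⟨a', m', n', x'⟩ ⟨ha', hn', hx'⟩
    simp only [L0, Lplus, Set.mem_setOf_eq] at *
    subst hm hn ha' hn' hx'
    refine ⟨by simp [brEinf], by simp [brEinf], ?_⟩
    simp only [brEinf]
    ext pt
    simp [EmapK_apply]
  · -- [L0,L-] ⊆ L-
    rintro ⟨a, m, n, x⟩ ⟨hm, hn⟩ ⟨a', m', n', x'⟩ ⟨ha', hm', hx'⟩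
    simp only [L0, Lminus, Set.mem_setOf_eq] at *
    subst hm hn ha' hm' hx'
    refine ⟨by simp [brEinf], by simp [brEinf], ?_⟩
    simp only [brEinf]
    ext pt
    simp [EmapK_apply]
  · -- [L+,L-] ⊆ L0
    rintro ⟨a, m, n, x⟩ ⟨ha, hn, hx⟩ ⟨a', m', n', x'⟩ ⟨ha', hm', hx'⟩
    simp only [Lplus, Lminus, L0, Set.mem_setOf_eq] at *
    subst ha hn hx ha' hm' hx'
    constructor <;> simp [brEinf]
  · -- [L+,L+] = 0
    rintro ⟨a, m, n, x⟩ ⟨ha, hn, hx⟩ ⟨a', m', n', x'⟩ ⟨ha', hn', hx'⟩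
    simp only [Lplus, Set.mem_setOf_eq] at *
    subst ha hn hx ha' hn' hx'
    refine Prod.ext (by simp [brEinf]) (Prod.ext (by simp [brEinf]) (Prod.ext (by simp [brEinf]) (Subtype.ext ?_)))
    simp only [brEinf]
    ext pt
    simp [EmapK_apply]
  · -- [L-,L-] = 0
    rintro ⟨a, m, n, x⟩ ⟨ha, hm, hx⟩ ⟨a', m', n', x'⟩ ⟨ha', hm', hx'⟩
    simp only [Lminus, Set.mem_setOf_eq] at *
    subst ha hm hx ha' hm' hx'
    refine Prod.ext (by simp [brEinf]) (Prod.ext (by simp [brEinf]) (Prod.ext (by simp [brEinf]) (Subtype.ext ?_)))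
    simp only [brEinf]
    ext pt
    simp [EmapK_apply]
end

section
/- The centre of the Lie algebra E_∞ is Z(E_∞) = {(a, 0, 0, 0) | a ∈ Ann_A(M)}: an element (a, m, n, x) ∈ E_∞ satisfies [(a,m,n,x), w] = 0 for all w ∈ E_∞ if and only if m = 0, n = 0, x = 0, and a·p = 0 for all p ∈ M. -/
/- Purely even case of the paper's super setting: K a commutative unital ring
containing 1/2, A a commutative unital associative K-algebra, M an A-module
(hence also a K-module), q : M × M → A a symmetric A-bilinear form. -/

variable {K A M : Type*} [CommRing K] [Invertible (2 : K)] [CommRing A] [Algebra K A]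
  [AddCommGroup M] [Module A M] [Module K M] [IsScalarTower K A M]
  [SMulCommClass A K M] [SMulCommClass K A M]

/-- the centre of `E_∞` is `{(a,0,0,0) | a ∈ Ann_A(M)}`: an element
`(a,m,n,x)` commutes with everything iff `m = 0`, `n = 0`, `x = 0` and `a·p = 0`
for all `p ∈ M`. -/
theorem stmt6 (q : M →ₗ[A] M →ₗ[A] A) (hq : ∀ m n : M, q m n = q n m)
    (E : Submodule K (Module.End K M))
    (hEe : ∀ m n : M, EmapK K q m n ∈ E)
    (hEo : (E : Set (Module.End K M)) ⊆ ospK K q)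
    (hbr : ∀ x ∈ E, ∀ y ∈ E, x * y - y * x ∈ E) :
    ∀ u : A × M × M × E,
      (∀ w : A × M × M × E, brEinf K q E hEe hbr u w = 0) ↔
        (u.2.1 = 0 ∧ u.2.2.1 = 0 ∧ u.2.2.2 = 0 ∧ ∀ p : M, u.1 • p = 0) := by
  rintro ⟨a, m, n, x⟩
  constructor
  · intro h
    have h1 := h (1, 0, 0, (0 : E))
    simp only [brEinf, Prod.mk_eq_zero, Prod.ext_iff, Prod.fst_zero, Prod.snd_zero,
      ZeroMemClass.coe_zero, LinearMap.zero_apply, map_zero, smul_zero, one_smul,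
      sub_zero, zero_sub, add_zero, zero_add, neg_zero, neg_eq_zero] at h1
    obtain ⟨-, hm, hn, -⟩ := h1
    have hap : ∀ p : M, a • p = 0 := by
      intro p
      have h2 := h (0, p, 0, (0 : E))
      have h3 := h (0, 0, p, (0 : E))
      simp only [brEinf, Prod.mk_eq_zero, Prod.ext_iff, Prod.fst_zero, Prod.snd_zero,
        ZeroMemClass.coe_zero, LinearMap.zero_apply, map_zero, smul_zero, zero_smul,
        sub_zero, zero_sub, add_zero, zero_add, neg_zero, neg_eq_zero] at h2 h3
      have e2 : a • p + (x : Module.End K M) p = 0 := h2.2.1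
      have e3 : -(a • p) + (x : Module.End K M) p = 0 := h3.2.2.1
      have : a • p + a • p = 0 := by
        have := sub_eq_zero.mpr (e2.trans e3.symm)
        simpa [sub_eq_add_neg, add_comm, add_left_comm] using this
      have h2s : (2 : K) • (a • p) = 0 := by
        rw [two_smul]; exact this
      calc a • p = (⅟(2:K) * 2) • (a • p) := by rw [invOf_mul_self, one_smul]
        _ = ⅟(2:K) • ((2:K) • (a • p)) := by rw [mul_smul]
        _ = 0 := by rw [h2s, smul_zero]
    have hxp : ∀ p : M, (x : Module.End K M) p = 0 := by
      intro p
      have h2 := h (0, p, 0, (0 : E))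
      simp only [brEinf, Prod.mk_eq_zero, Prod.ext_iff, Prod.fst_zero, Prod.snd_zero,
        ZeroMemClass.coe_zero, LinearMap.zero_apply, map_zero, smul_zero, zero_smul,
        sub_zero, zero_sub, add_zero, zero_add, neg_zero, neg_eq_zero] at h2
      have e2 : a • p + (x : Module.End K M) p = 0 := h2.2.1
      have := hap p
      rw [this, zero_add] at e2
      exact e2
    refine ⟨hm, hn, ?_, hap⟩
    exact Subtype.ext (LinearMap.ext hxp)
  · rintro ⟨hm, hn, hx, ha⟩ w
    replace hm : m = 0 := hm
    replace hn : n = 0 := hn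
    replace hx : x = 0 := hx
    replace ha : ∀ p : M, a • p = 0 := ha
    subst hm hn hx
    have hx' : ((0 : E) : Module.End K M) = 0 := rfl
    refine Prod.ext ?_ (Prod.ext ?_ (Prod.ext ?_ ?_))
    · simp [brEinf]
    · simp [brEinf, hx', ha]
    · simp [brEinf, hx', ha]
    · refine Subtype.ext (LinearMap.ext fun p => ?_)
      simp [brEinf, EmapK, hx']
end

section
/- For a K-derivation d of the Lie algebra L = E_∞ the following are equivalent: (i) d((1, 0, 0, 0)) ∈ Z(L); (ii) d(L_0) ⊆ L_0, d(L_+) ⊆ L_+, and d(L_-) ⊆ L_-. Moreover the set of K-derivations d of L with d((1,0,0,0)) ∈ Z(L) is a Lie subalgebra of the Lie algebra of all K-derivations of L under the commutator bracket. -/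
/- Purely even case of the paper's super setting: K a commutative unital ring
containing 1/2, A a commutative unital associative K-algebra, M an A-module
(hence also a K-module), q : M × M → A a symmetric A-bilinear form. -/

variable {K A M : Type*} [CommRing K] [Invertible (2 : K)] [CommRing A] [Algebra K A]
  [AddCommGroup M] [Module A M] [Module K M] [IsScalarTower K A M]
  [SMulCommClass A K M] [SMulCommClass K A M]

set_option linter.unusedSectionVars false

section helpers
variable (q : M →ₗ[A] M →ₗ[A] A) (E : Submodule K (Module.End K M))
  (hEe : ∀ m n : M, EmapK K q m n ∈ E)
  (hbr : ∀ x ∈ E, ∀ y ∈ E, x * y - y * x ∈ E)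

lemma qsmul (c : K) (m n : M) : q (c • m) n = c • q m n := by
  rw [show c • m = (algebraMap K A c) • m from (algebraMap_smul A c m).symm,
    map_smul, LinearMap.smul_apply, algebraMap_smul]

lemma qsmul' (c : K) (m n : M) : q m (c • n) = c • q m n := by
  rw [show c • n = (algebraMap K A c) • n from (algebraMap_smul A c n).symm,
    map_smul, algebraMap_smul]

lemma EmapK_add_left (m m' n : M) :
    EmapK K q (m + m') n = EmapK K q m n + EmapK K q m' n := by
  ext p
  simp only [EmapK, LinearMap.sub_apply, LinearMap.smulRight_apply,
    LinearMap.coe_restrictScalars, map_add, LinearMap.add_apply, add_smul, smul_add]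
  abel

lemma EmapK_add_right (m n n' : M) :
    EmapK K q m (n + n') = EmapK K q m n + EmapK K q m n' := by
  ext p
  simp only [EmapK, LinearMap.sub_apply, LinearMap.smulRight_apply,
    LinearMap.coe_restrictScalars, map_add, LinearMap.add_apply, add_smul, smul_add]
  abel

lemma EmapK_smul_left (c : K) (m n : M) :
    EmapK K q (c • m) n = c • EmapK K q m n := by
  ext p
  simp only [EmapK, LinearMap.sub_apply, LinearMap.smulRight_apply,
    LinearMap.coe_restrictScalars, LinearMap.smul_apply, qsmul, LinearMap.smul_apply,
    smul_sub, smul_smul]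
  rw [smul_comm (q n p) c m, smul_assoc]

lemma EmapK_smul_right (c : K) (m n : M) :
    EmapK K q m (c • n) = c • EmapK K q m n := by
  ext p
  simp only [EmapK, LinearMap.sub_apply, LinearMap.smulRight_apply,
    LinearMap.coe_restrictScalars, LinearMap.smul_apply, qsmul, smul_sub]
  rw [smul_assoc, smul_comm (q m p) c n]

lemma EmapK_zero_left (n : M) : EmapK K q 0 n = 0 := by
  ext p; simp [EmapK]

lemma EmapK_zero_right (m : M) : EmapK K q m 0 = 0 := by
  ext p; simp [EmapK]

end helpers

section brlemmas
variable (q : M →ₗ[A] M →ₗ[A] A) (E : Submodule K (Module.End K M))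
  (hEe : ∀ m n : M, EmapK K q m n ∈ E)
  (hbr : ∀ x ∈ E, ∀ y ∈ E, x * y - y * x ∈ E)

local notation "br" => brEinf K q E hEe hbr

lemma br_add_left (u v w : A × M × M × E) : br (u + v) w = br u w + br v w := by
  refine Prod.ext ?_ (Prod.ext ?_ (Prod.ext ?_ (Subtype.ext ?_)))
  all_goals
    simp only [brEinf, Prod.fst_add, Prod.snd_add, Submodule.coe_add,
      LinearMap.add_apply, map_add, add_smul, smul_add, EmapK_add_left,
      EmapK_add_right, add_mul, mul_add]
    abel

lemma br_add_right (u v w : A × M × M × E) : br u (v + w) = br u v + br u w := by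
  refine Prod.ext ?_ (Prod.ext ?_ (Prod.ext ?_ (Subtype.ext ?_)))
  all_goals
    simp only [brEinf, Prod.fst_add, Prod.snd_add, Submodule.coe_add,
      LinearMap.add_apply, map_add, add_smul, smul_add, EmapK_add_left,
      EmapK_add_right, add_mul, mul_add]
    abel

lemma br_smul_left (c : K) (u w : A × M × M × E) : br (c • u) w = c • br u w := by
  refine Prod.ext ?_ (Prod.ext ?_ (Prod.ext ?_ (Subtype.ext ?_)))
  · simp only [brEinf, Prod.smul_fst, Prod.smul_snd, qsmul, smul_sub]
  · simp only [brEinf, Prod.smul_fst, Prod.smul_snd, Submodule.coe_smul,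
      LinearMap.smul_apply, map_smul, smul_assoc, smul_sub, smul_add]
    rw [smul_comm w.1 c u.2.1]
  · simp only [brEinf, Prod.smul_fst, Prod.smul_snd, Submodule.coe_smul,
      LinearMap.smul_apply, map_smul, smul_assoc, smul_sub, smul_add, smul_neg]
    rw [smul_comm w.1 c u.2.2.1]
  · simp only [brEinf, Prod.smul_fst, Prod.smul_snd, Submodule.coe_smul,
      EmapK_smul_left, EmapK_smul_right, smul_mul_assoc, mul_smul_comm,
      smul_add, smul_sub]

lemma br_smul_right (c : K) (u w : A × M × M × E) : br u (c • w) = c • br u w := by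
  refine Prod.ext ?_ (Prod.ext ?_ (Prod.ext ?_ (Subtype.ext ?_)))
  · simp only [brEinf, Prod.smul_fst, Prod.smul_snd, qsmul', smul_sub]
  · simp only [brEinf, Prod.smul_fst, Prod.smul_snd, Submodule.coe_smul,
      LinearMap.smul_apply, map_smul, smul_assoc, smul_sub, smul_add]
    rw [smul_comm u.1 c w.2.1]
  · simp only [brEinf, Prod.smul_fst, Prod.smul_snd, Submodule.coe_smul,
      LinearMap.smul_apply, map_smul, smul_assoc, smul_sub, smul_add, smul_neg]
    rw [smul_comm u.1 c w.2.2.1]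
  · simp only [brEinf, Prod.smul_fst, Prod.smul_snd, Submodule.coe_smul,
      EmapK_smul_left, EmapK_smul_right, smul_mul_assoc, mul_smul_comm,
      smul_add, smul_sub]

lemma br_e (u : A × M × M × E) :
    br ((1 : A), (0 : M), (0 : M), (0 : E)) u = (0, u.2.1, -u.2.2.1, 0) := by
  refine Prod.ext ?_ (Prod.ext ?_ (Prod.ext ?_ (Subtype.ext ?_)))
  all_goals
    simp [brEinf, EmapK_zero_left]

end brlemmas

section mainhelpers
variable (q : M →ₗ[A] M →ₗ[A] A) (E : Submodule K (Module.End K M))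
  (hEe : ∀ m n : M, EmapK K q m n ∈ E)
  (hbr : ∀ x ∈ E, ∀ y ∈ E, x * y - y * x ∈ E)

local notation "br" => brEinf K q E hEe hbr

lemma br_sub_left (u v w : A × M × M × E) : br (u - v) w = br u w - br v w := by
  rw [sub_eq_add_neg, ← neg_one_smul K v, br_add_left, br_smul_left]
  module

lemma br_sub_right (u v w : A × M × M × E) : br u (v - w) = br u v - br u w := by
  rw [sub_eq_add_neg, ← neg_one_smul K w, br_add_right, br_smul_right]
  module

lemma half_cancel {T : Type*} [AddCommGroup T] [Module K T] (x : T) (h : x + x = 0) :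
    x = 0 := by
  have h2 : (2 : K) • x = 0 := by rw [two_smul]; exact h
  calc x = (⅟(2:K) * 2) • x := by rw [invOf_mul_self, one_smul]
    _ = ⅟(2:K) • ((2:K) • x) := by rw [mul_smul]
    _ = 0 := by rw [h2, smul_zero]

lemma central_of_der (d : (A × M × M × E) → (A × M × M × E)) (hd : IsLinearMap K d)
    (hder : ∀ u v, d (br u v) = br (d u) v + br u (d v))
    (z : A × M × M × E) (hz : ∀ w, br z w = 0) : ∀ w, br (d z) w = 0 := by
  intro w
  have h := hder z w
  rw [hz w, hd.map_zero, hz (d w), add_zero] at h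
  exact h.symm

end mainhelpers



/-- for a `K`-derivation `d` of `L = E_∞`:
`d((1,0,0,0)) ∈ Z(L)` iff `d` preserves `L_0`, `L_+` and `L_-`; moreover the
set of such derivations is a Lie subalgebra of the derivations of `L` (closed
under `K`-linear combinations and commutators). -/
theorem stmt8 (q : M →ₗ[A] M →ₗ[A] A) (hq : ∀ m n : M, q m n = q n m)
    (E : Submodule K (Module.End K M))
    (hEe : ∀ m n : M, EmapK K q m n ∈ E)
    (hEo : (E : Set (Module.End K M)) ⊆ ospK K q)
    (hbr : ∀ x ∈ E, ∀ y ∈ E, x * y - y * x ∈ E) :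
    (∀ d : (A × M × M × E) → (A × M × M × E), IsLinearMap K d →
      (∀ u v, d (brEinf K q E hEe hbr u v)
          = brEinf K q E hEe hbr (d u) v + brEinf K q E hEe hbr u (d v)) →
      ((∀ w, brEinf K q E hEe hbr (d ((1 : A), (0 : M), (0 : M), (0 : E))) w = 0) ↔
        ((∀ u ∈ L0 K E, d u ∈ L0 K E) ∧ (∀ u ∈ Lplus K E, d u ∈ Lplus K E) ∧
          (∀ u ∈ Lminus K E, d u ∈ Lminus K E)))) ∧
    (∀ d₁ ∈ {d : (A × M × M × E) → (A × M × M × E) | IsLinearMap K d ∧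
        (∀ u v, d (brEinf K q E hEe hbr u v)
            = brEinf K q E hEe hbr (d u) v + brEinf K q E hEe hbr u (d v)) ∧
        (∀ w, brEinf K q E hEe hbr (d ((1 : A), (0 : M), (0 : M), (0 : E))) w = 0)},
      ∀ d₂ ∈ {d : (A × M × M × E) → (A × M × M × E) | IsLinearMap K d ∧
        (∀ u v, d (brEinf K q E hEe hbr u v)
            = brEinf K q E hEe hbr (d u) v + brEinf K q E hEe hbr u (d v)) ∧
        (∀ w, brEinf K q E hEe hbr (d ((1 : A), (0 : M), (0 : M), (0 : E))) w = 0)},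
      ∀ c : K,
        (fun u => c • d₁ u + d₂ u) ∈
          {d : (A × M × M × E) → (A × M × M × E) | IsLinearMap K d ∧
            (∀ u v, d (brEinf K q E hEe hbr u v)
                = brEinf K q E hEe hbr (d u) v + brEinf K q E hEe hbr u (d v)) ∧
            (∀ w, brEinf K q E hEe hbr (d ((1 : A), (0 : M), (0 : M), (0 : E))) w = 0)} ∧
        (fun u => d₁ (d₂ u) - d₂ (d₁ u)) ∈
          {d : (A × M × M × E) → (A × M × M × E) | IsLinearMap K d ∧
            (∀ u v, d (brEinf K q E hEe hbr u v)
                = brEinf K q E hEe hbr (d u) v + brEinf K q E hEe hbr u (d v)) ∧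
            (∀ w, brEinf K q E hEe hbr (d ((1 : A), (0 : M), (0 : M), (0 : E))) w = 0)}) := by
  set e : A × M × M × E := ((1 : A), (0 : M), (0 : M), (0 : E)) with he
  constructor
  · intro d hd hder
    constructor
    · -- (i) → (ii)
      intro hc
      refine ⟨?_, ?_, ?_⟩
      · -- L0
        intro u hu
        have hbe : brEinf K q E hEe hbr e u = 0 := by
          rw [br_e]
          simp [Prod.ext_iff, hu.1, hu.2]
        have h := hder e u
        rw [hbe, hd.map_zero, hc u, zero_add] at h
        rw [br_e] at h
        have h1 := congrArg (fun p => p.2.1) h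
        have h2 := congrArg (fun p => p.2.2.1) h
        simp only [Prod.snd_zero, Prod.fst_zero] at h1 h2
        exact ⟨h1.symm, by simpa [neg_eq_zero] using h2.symm⟩
      · -- L+
        intro u hu
        have hbe : brEinf K q E hEe hbr e u = u := by
          rw [br_e]
          refine Prod.ext hu.1.symm (Prod.ext rfl (Prod.ext ?_ hu.2.2.symm))
          rw [hu.2.1, neg_zero]
        have h := hder e u
        rw [hbe, hc u, zero_add, br_e] at h
        have h1 := congrArg (fun p => p.1) h
        have h2 := congrArg (fun p => p.2.2.1) h
        have h3 := congrArg (fun p => p.2.2.2) h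
        simp only at h1 h2 h3
        refine ⟨h1, half_cancel (K := K) _ ?_, h3⟩
        nth_rewrite 1 [h2]
        rw [neg_add_cancel]
      · -- L-
        intro u hu
        have hbe : brEinf K q E hEe hbr e u = -u := by
          rw [br_e]
          simp [Prod.ext_iff, hu.1, hu.2.1, hu.2.2]
        have h := hder e u
        rw [hbe, hd.map_neg, hc u, zero_add, br_e] at h
        have h1 := congrArg (fun p => p.1) h
        have h2 := congrArg (fun p => p.2.1) h
        have h3 := congrArg (fun p => p.2.2.2) h
        simp only [Prod.fst_neg, Prod.snd_neg] at h1 h2 h3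
        refine ⟨by simpa [neg_eq_zero] using h1.symm, half_cancel (K := K) _ ?_,
          by simpa [neg_eq_zero] using h3.symm⟩
        nth_rewrite 2 [← h2]
        rw [add_neg_cancel]
    · -- (ii) → (i)
      rintro ⟨h0, hp, hm⟩
      set z := d e with hz
      have hz0 : z.2.1 = 0 ∧ z.2.2.1 = 0 := h0 e ⟨rfl, rfl⟩
      -- From L+ : z.1 • m + zx m = 0 for all m
      have hplus : ∀ m : M, z.1 • m + (z.2.2.2 : Module.End K M) m = 0 := by
        intro m
        set u : A × M × M × E := ((0 : A), m, (0 : M), (0 : E)) with hu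
        have hbe : brEinf K q E hEe hbr e u = u := by
          rw [br_e]; simp [hu]
        have hdu := hp u ⟨rfl, rfl, rfl⟩
        have hbe2 : brEinf K q E hEe hbr e (d u) = d u := by
          rw [br_e]
          refine Prod.ext hdu.1.symm (Prod.ext rfl (Prod.ext ?_ hdu.2.2.symm))
          rw [hdu.2.1, neg_zero]
        have h := hder e u
        rw [hbe, hbe2] at h
        have hzu : brEinf K q E hEe hbr z u = 0 := by
          nth_rewrite 1 [← zero_add (d u)] at h
          exact (add_right_cancel h).symm
        have := congrArg (fun p => p.2.1) hzu
        simpa [brEinf, hu] using this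
      -- From L- : zx n = z.1 • n for all n
      have hminus : ∀ n : M, (z.2.2.2 : Module.End K M) n = z.1 • n := by
        intro n
        set u : A × M × M × E := ((0 : A), (0 : M), n, (0 : E)) with hu
        have hbe : brEinf K q E hEe hbr e u = -u := by
          rw [br_e]; simp [hu, Prod.ext_iff]
        have hdu := hm u ⟨rfl, rfl, rfl⟩
        have hbe2 : brEinf K q E hEe hbr e (d u) = -(d u) := by
          rw [br_e]
          simp [Prod.ext_iff, hdu.1, hdu.2.1, hdu.2.2]
        have h := hder e u
        rw [hbe, hd.map_neg, hbe2] at h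
        have hzu : brEinf K q E hEe hbr z u = 0 := by
          nth_rewrite 1 [← zero_add (-(d u))] at h
          exact (add_right_cancel h).symm
        have := congrArg (fun p => p.2.2.1) hzu
        have h' : -(z.1 • n) + (z.2.2.2 : Module.End K M) n = 0 := by
          simpa [brEinf, hu] using this
        have := congrArg (fun t => z.1 • n + t) h'
        simpa [← add_assoc] using this
      have hsm : ∀ p : M, z.1 • p = 0 := by
        intro p
        refine half_cancel (K := K) _ ?_
        have := hplus p
        rw [hminus p] at this
        exact this
      have hxz : ∀ p : M, (z.2.2.2 : Module.End K M) p = 0 := by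
        intro p
        rw [hminus p, hsm p]
      have hxz0 : (z.2.2.2 : Module.End K M) = 0 := LinearMap.ext hxz
      intro w
      refine Prod.ext ?_ (Prod.ext ?_ (Prod.ext ?_ (Subtype.ext ?_)))
      · show q z.2.1 w.2.2.1 - q z.2.2.1 w.2.1 = 0
        simp [hz0.1, hz0.2]
      · show z.1 • w.2.1 + (z.2.2.2 : Module.End K M) w.2.1 - w.1 • z.2.1
          - (w.2.2.2 : Module.End K M) z.2.1 = 0
        simp [hsm, hxz, hz0.1]
      · show -(z.1 • w.2.2.1) + (z.2.2.2 : Module.End K M) w.2.2.1 + w.1 • z.2.2.1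
          - (w.2.2.2 : Module.End K M) z.2.2.1 = 0
        simp [hsm, hxz, hz0.2]
      · show EmapK K q z.2.1 w.2.2.1 + EmapK K q z.2.2.1 w.2.1
          + ((z.2.2.2 : Module.End K M) * (w.2.2.2 : Module.End K M)
            - (w.2.2.2 : Module.End K M) * (z.2.2.2 : Module.End K M)) = 0
        simp [hz0.1, hz0.2, EmapK_zero_left, hxz0]
  · -- the Lie subalgebra part
    rintro d₁ ⟨h₁l, h₁d, h₁c⟩ d₂ ⟨h₂l, h₂d, h₂c⟩ c
    constructor
    · refine ⟨⟨?_, ?_⟩, ?_, ?_⟩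
      · intro u v
        rw [h₁l.map_add, h₂l.map_add, smul_add]
        abel
      · intro k u
        rw [h₁l.map_smul, h₂l.map_smul, smul_add, smul_comm c k]
      · intro u v
        dsimp only
        simp only [h₁d, h₂d, br_add_left, br_add_right, br_smul_left, br_smul_right,
          smul_add]
        abel
      · intro w
        dsimp only
        rw [br_add_left, br_smul_left, h₁c w, h₂c w, smul_zero, add_zero]
    · refine ⟨⟨?_, ?_⟩, ?_, ?_⟩
      · intro u v
        rw [h₂l.map_add, h₁l.map_add, h₁l.map_add, h₂l.map_add]
        abel
      · intro k u
        rw [h₂l.map_smul, h₁l.map_smul, h₁l.map_smul, h₂l.map_smul, smul_sub]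
      · intro u v
        dsimp only
        have e₁ : d₁ (d₂ (brEinf K q E hEe hbr u v))
            = brEinf K q E hEe hbr (d₁ (d₂ u)) v + brEinf K q E hEe hbr (d₂ u) (d₁ v)
              + (brEinf K q E hEe hbr (d₁ u) (d₂ v)
                + brEinf K q E hEe hbr u (d₁ (d₂ v))) := by
          rw [h₂d, h₁l.map_add, h₁d, h₁d]
        have e₂ : d₂ (d₁ (brEinf K q E hEe hbr u v))
            = brEinf K q E hEe hbr (d₂ (d₁ u)) v + brEinf K q E hEe hbr (d₁ u) (d₂ v)
              + (brEinf K q E hEe hbr (d₂ u) (d₁ v)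
                + brEinf K q E hEe hbr u (d₂ (d₁ v))) := by
          rw [h₁d, h₂l.map_add, h₂d, h₂d]
        rw [e₁, e₂, br_sub_left, br_sub_right]
        abel
      · intro w
        dsimp only
        have hc1 : ∀ w, brEinf K q E hEe hbr (d₁ (d₂ e)) w = 0 :=
          central_of_der q E hEe hbr d₁ h₁l h₁d _ h₂c
        have hc2 : ∀ w, brEinf K q E hEe hbr (d₂ (d₁ e)) w = 0 :=
          central_of_der q E hEe hbr d₂ h₂l h₂d _ h₁c
        rw [br_sub_left, hc1 w, hc2 w, sub_zero]
end
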